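/- Let (v,x) of type (α;β) have normal basis v_{i,j}, and suppose β_l = β_{l+1} for some l < ℓ(α). Let V_1 be the span of the v_{i,j} with i ≠ l, l+1 together with all vectors x^m(v_{l,α_l+β_l} + v_{l+1,α_{l+1}+β_l}), m ≥ 0, and let V_2 be the span of {v_{l+1,j} : all j}. Then V = V_1 ⊕ V_2, both summands are nonzero and x-stable, and v ∈ V_1. -/

import Mathlib

/-!
Adding to each vector of row `l` the vector of row `l + 1` at the same height, the two rows
aligned at their tops, is a unipotent change of basis. Its new row `l` is the `x`-orbit of the
sum of the two top vectors, so `V₁` and `V₂` are spanned by complementary parts of the new basis.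
Since `β l = β (l + 1)`, the components of `v` in rows `l` and `l + 1` lie at the same depth
`β l` below the tops, so their sum is `x ^ β l` applied to that sum of tops.
-/

open Module Submodule

variable {ι R M : Type*}

theorem Module.Basis.exists_basis_apply_eq_add [CommRing R] [AddCommGroup M] [Module R M]
    (b : Basis ι R M) (f : ι → M) (hf : ∀ p, b.constr R f (f p) = 0) :
    ∃ b' : Basis ι R M, ∀ p, b' p = b p + f p := by
  have hnil : IsNilpotent (b.constr R f) := ⟨2, b.ext fun p => by simp [pow_two, hf]⟩
  exact ⟨b.map (LinearMap.GeneralLinearGroup.toLinearEquiv hnil.isUnit_one_add.unit),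
    fun p => by simp⟩

theorem Submodule.mapsTo_span_self_of_mapsTo [Semiring R] [AddCommMonoid M] [Module R M]
    {f : M →ₗ[R] M} {s : Set M} (h : Set.MapsTo f s (span R s)) :
    Set.MapsTo f (span R s) (span R s) := by
  simpa using mapsTo_span h

theorem Submodule.sum_mem_of_add_mem [Semiring R] [AddCommMonoid M] [Module R M] [Fintype ι]
    {p : Submodule R M} {g : ι → M} {i j : ι} (hij : i ≠ j)
    (hrest : ∀ k, k ≠ i → k ≠ j → g k ∈ p) (hpair : g i + g j ∈ p) : ∑ k, g k ∈ p := by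
  classical
  rw [← Finset.add_sum_erase _ _ (Finset.mem_univ i),
    ← Finset.add_sum_erase _ _ (Finset.mem_erase.2 ⟨hij.symm, Finset.mem_univ j⟩), ← add_assoc]
  refine add_mem hpair (sum_mem fun k hk => ?_)
  obtain ⟨hkj, hki, -⟩ := by simpa only [Finset.mem_erase] using hk
  exact hrest k hki hkj

noncomputable section NormalBasis

variable [CommRing R] [AddCommGroup M] [Module R M] {len : ι → ℕ}

/-- `b ⟨i, j⟩` is the paper's `v_{i,j+1}`: `x` moves every row one step down and kills its
bottom vector `b ⟨i, 0⟩`. -/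
def IsNormalBasis (x : Module.End R M) (b : Basis (Σ i, Fin (len i)) R M) : Prop :=
  ∀ p : Σ i, Fin (len i), x (b p) =
    if _ : (p.2 : ℕ) = 0 then 0 else b ⟨p.1, ⟨(p.2 : ℕ) - 1, lt_of_le_of_lt (Nat.sub_le _ _) p.2.2⟩⟩

abbrev rowTop (i : ι) (h : 0 < len i) : Σ i, Fin (len i) := ⟨i, ⟨len i - 1, by omega⟩⟩

def spanRowsOrbit (x : Module.End R M) (b : Basis (Σ i, Fin (len i)) R M) (P : ι → Prop) (u : M) :
    Submodule R M :=
  span R ({w | ∃ p, w = b p ∧ P p.1} ∪ {w | ∃ m : ℕ, w = (x ^ m) u})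

variable {b : Basis (Σ i, Fin (len i)) R M} {x : Module.End R M} {i₀ i₁ : ι}

namespace IsNormalBasis

theorem pow_apply (hb : IsNormalBasis x b) (m : ℕ) (p : Σ i, Fin (len i)) :
    (x ^ m) (b p) = if (p.2 : ℕ) < m then 0
      else b ⟨p.1, ⟨(p.2 : ℕ) - m, lt_of_le_of_lt (Nat.sub_le _ _) p.2.2⟩⟩ := by
  induction m with
  | zero => simp
  | succ m ih =>
    rw [pow_succ', Module.End.mul_apply, ih]
    split_ifs
    · exact map_zero x
    · omega
    · rw [hb, dif_pos (by simp only; omega)]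
    · rw [hb, dif_neg (by simp only; omega)]
      congr 3

theorem pow_apply_rowTop (hb : IsNormalBasis x b) {i : ι} (h : 0 < len i) {m : ℕ}
    (hm : m < len i) : (x ^ m) (b (rowTop i h)) = b ⟨i, ⟨len i - 1 - m, by omega⟩⟩ := by
  rw [hb.pow_apply, if_neg (by simp only; omega)]

theorem apply_mem_span (hb : IsNormalBasis x b) {s : Set M} (p : Σ i, Fin (len i))
    (hs : ∀ j, b ⟨p.1, j⟩ ∈ s) : x (b p) ∈ span R s := by
  rw [hb]
  split
  · exact zero_mem _
  · exact subset_span (hs _)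

theorem pow_apply_add_rowTop_of_le (hb : IsNormalBasis x b) (hle : len i₁ ≤ len i₀)
    (h₁ : 0 < len i₁) {m : ℕ} (hm : len i₀ ≤ m) :
    (x ^ m) (b (rowTop i₀ (h₁.trans_le hle)) + b (rowTop i₁ h₁)) = 0 := by
  rw [map_add, hb.pow_apply, hb.pow_apply, if_pos, if_pos, add_zero] <;> simp only <;> omega

theorem sum_mem_spanRowsOrbit [Fintype ι] (hb : IsNormalBasis x b) (hi : i₀ ≠ i₁)
    (hle : len i₁ ≤ len i₀) {a : ι → ℕ} (ha : ∀ i, a i ≤ len i) (ha₁ : 0 < a i₁)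
    (hgap : len i₀ - a i₀ = len i₁ - a i₁) :
    ∑ i, (if h : 0 < a i then b ⟨i, ⟨a i - 1, (Nat.sub_lt h one_pos).trans_le (ha i)⟩⟩ else 0) ∈
      spanRowsOrbit x b (fun i => i ≠ i₀ ∧ i ≠ i₁)
        (b (rowTop i₀ ((ha₁.trans_le (ha i₁)).trans_le hle)) +
          b (rowTop i₁ (ha₁.trans_le (ha i₁)))) := by
  have := ha i₀
  have := ha i₁
  refine sum_mem_of_add_mem hi (fun i hi₀ hi₁ => ?_) ?_
  · split
    · exact subset_span (Or.inl ⟨_, rfl, hi₀, hi₁⟩)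
    · exact zero_mem _
  · rw [dif_pos (by omega), dif_pos ha₁]
    refine subset_span (Or.inr ⟨len i₀ - a i₀, ?_⟩)
    rw [map_add, hb.pow_apply_rowTop _ (by omega), hb.pow_apply_rowTop _ (by omega)]
    congr 3 <;> simp only [Fin.mk.injEq] <;> omega

theorem mapsTo_span_row (hb : IsNormalBasis x b) (i : ι) :
    Set.MapsTo x (span R (Set.range fun j => b ⟨i, j⟩)) (span R (Set.range fun j => b ⟨i, j⟩)) :=
  mapsTo_span_self_of_mapsTo fun _ ⟨j, hj⟩ => hj ▸ hb.apply_mem_span ⟨i, j⟩ fun j => ⟨j, rfl⟩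

theorem mapsTo_spanRowsOrbit (hb : IsNormalBasis x b) (P : ι → Prop) (u : M) :
    Set.MapsTo x (spanRowsOrbit x b P u) (spanRowsOrbit x b P u) := by
  refine mapsTo_span_self_of_mapsTo ?_
  rintro _ (⟨p, rfl, hp⟩ | ⟨m, rfl⟩)
  · exact hb.apply_mem_span p fun j => Or.inl ⟨_, rfl, hp⟩
  · exact subset_span (Or.inr ⟨m + 1, by rw [pow_succ', Module.End.mul_apply]⟩)

end IsNormalBasis

variable [DecidableEq ι]

/-- The vector of row `i₁` level with `b p` when rows `i₀` and `i₁` are aligned at their tops;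
zero off row `i₀` and below the bottom of row `i₁`. -/
def alignedRow (b : Basis (Σ i, Fin (len i)) R M) (i₀ i₁ : ι) (p : Σ i, Fin (len i)) : M :=
  if h : p.1 = i₀ ∧ len i₀ - len i₁ ≤ p.2 then
    b ⟨i₁, ⟨p.2 - (len i₀ - len i₁), by have := p.2.2; have := congrArg len h.1; omega⟩⟩
  else 0

theorem alignedRow_of_ne {p : Σ i, Fin (len i)} (hp : p.1 ≠ i₀) : alignedRow b i₀ i₁ p = 0 :=
  dif_neg fun h => hp h.1

theorem constr_alignedRow_alignedRow (hi : i₀ ≠ i₁) (p : Σ i, Fin (len i)) :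
    b.constr R (alignedRow b i₀ i₁) (alignedRow b i₀ i₁ p) = 0 := by
  by_cases h : p.1 = i₀ ∧ len i₀ - len i₁ ≤ p.2
  · rw [alignedRow, dif_pos h, Basis.constr_basis]
    exact alignedRow_of_ne hi.symm
  · rw [alignedRow, dif_neg h, map_zero]

theorem range_row_eq_image {b' : (Σ i, Fin (len i)) → M} (hi : i₀ ≠ i₁)
    (hb' : ∀ p, b' p = b p + alignedRow b i₀ i₁ p) :
    Set.range (fun j => b ⟨i₁, j⟩) = b' '' (Sigma.fst ⁻¹' {i₁}) := by
  rw [← Set.range_sigmaMk, ← Set.range_comp]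
  congr
  funext j
  rw [Function.comp_apply, hb', alignedRow_of_ne hi.symm, add_zero]

namespace IsNormalBasis

theorem pow_apply_add_rowTop (hb : IsNormalBasis x b) (hle : len i₁ ≤ len i₀) (h₁ : 0 < len i₁)
    {m : ℕ} (hm : m < len i₀) :
    (x ^ m) (b (rowTop i₀ (h₁.trans_le hle)) + b (rowTop i₁ h₁)) =
      b ⟨i₀, ⟨len i₀ - 1 - m, by omega⟩⟩ + alignedRow b i₀ i₁ ⟨i₀, ⟨len i₀ - 1 - m, by omega⟩⟩ := by
  rw [map_add, hb.pow_apply_rowTop _ hm, alignedRow, hb.pow_apply]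
  congr 1
  obtain hm₁ | hm₁ := lt_or_ge m (len i₁)
  · rw [if_neg (by simp only; omega), dif_pos ⟨rfl, by simp only; omega⟩]
    congr 3
    simp only
    omega
  · rw [if_pos (by simp only; omega), dif_neg (by simp only [true_and, not_le]; omega)]

theorem spanRowsOrbit_eq (hb : IsNormalBasis x b) (hi : i₀ ≠ i₁) (hle : len i₁ ≤ len i₀)
    (h₁ : 0 < len i₁) {b' : (Σ i, Fin (len i)) → M}
    (hb' : ∀ p, b' p = b p + alignedRow b i₀ i₁ p) :
    spanRowsOrbit x b (fun i => i ≠ i₀ ∧ i ≠ i₁)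
        (b (rowTop i₀ (h₁.trans_le hle)) + b (rowTop i₁ h₁)) =
      span R (b' '' (Sigma.fst ⁻¹' {i₁})ᶜ) := by
  apply le_antisymm <;> rw [spanRowsOrbit, span_le]
  · rintro w (⟨p, rfl, hp₀, hp₁⟩ | ⟨m, rfl⟩)
    · exact subset_span ⟨p, hp₁, by rw [hb', alignedRow_of_ne hp₀, add_zero]⟩
    obtain hm | hm := lt_or_ge m (len i₀)
    · rw [hb.pow_apply_add_rowTop hle h₁ hm, ← hb']
      exact subset_span ⟨_, hi, rfl⟩
    · rw [hb.pow_apply_add_rowTop_of_le hle h₁ hm]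
      exact zero_mem _
  · rintro _ ⟨⟨i, j, hj⟩, hp, rfl⟩
    apply subset_span
    by_cases hi₀ : i = i₀
    · subst hi₀
      refine Or.inr ⟨len i - 1 - j, ?_⟩
      rw [hb.pow_apply_add_rowTop hle h₁ (by omega), ← hb']
      congr 3
      omega
    · exact Or.inl ⟨_, by rw [hb', alignedRow_of_ne hi₀, add_zero], hi₀, hp⟩

end IsNormalBasis

end NormalBasis

/-- For a normal basis `b ⟨i,j⟩` of `(v,x)` of type `(α;β)` with
`β l = β (l+1)` and `l + 1 < ℓ(α)` (so `α (l+1) > 0`), let `V₁` be the span of the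
basis vectors in rows `i ≠ l, l+1` together with the vectors
`x^m (b ⟨l, α l + β l⟩ + b ⟨l+1, α (l+1) + β l⟩)` (top boxes of rows `l`, `l+1`) for all
`m ≥ 0`, and `V₂` the span of row `l+1`.  Then `V = V₁ ⊕ V₂`, both summands are nonzero
and `x`-stable, and `v ∈ V₁`. -/
theorem decomposition_when_beta_parts_equal
    (F : Type) [Field F] (V : Type) [AddCommGroup V] [Module F V]
    (k : ℕ) (α β : ℕ → ℕ) (hα : Antitone α)
    (b : Module.Basis (Σ i : Fin k, Fin (α i + β i)) F V)
    (x : Module.End F V)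
    (hx : ∀ p : Σ i : Fin k, Fin (α i + β i), x (b p) =
      if _ : (p.2 : ℕ) = 0 then 0
      else b ⟨p.1, ⟨(p.2 : ℕ) - 1, lt_of_le_of_lt (Nat.sub_le _ _) p.2.2⟩⟩)
    (v : V)
    (hv : v = ∑ i : Fin k,
      if h : 0 < α i then b ⟨i, ⟨α i - 1, by omega⟩⟩ else 0)
    (l : ℕ) (hl : l + 1 < k) (heq : β l = β (l + 1)) (hne : 0 < α (l + 1))
    (V₁ V₂ : Submodule F V)
    (hV₁ : V₁ = Submodule.span F
      ({w : V | ∃ p : Σ i : Fin k, Fin (α i + β i),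
          w = b p ∧ (p.1 : ℕ) ≠ l ∧ (p.1 : ℕ) ≠ l + 1}
        ∪ {w : V | ∃ m : ℕ, w = (x ^ m)
            (b ⟨⟨l, by omega⟩, ⟨α l + β l - 1,
                by simp only [Fin.val_mk]; have h1 : α (l + 1) ≤ α l := hα (by omega); omega⟩⟩
             + b ⟨⟨l + 1, hl⟩, ⟨α (l + 1) + β l - 1, by simp only [Fin.val_mk]; omega⟩⟩)}))
    (hV₂ : V₂ = Submodule.span F
      (Set.range fun j : Fin (α (l + 1) + β (l + 1)) => b ⟨⟨l + 1, hl⟩, j⟩)) :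
    IsCompl V₁ V₂ ∧ V₁ ≠ ⊥ ∧ V₂ ≠ ⊥
    ∧ (∀ w ∈ V₁, x w ∈ V₁) ∧ (∀ w ∈ V₂, x w ∈ V₂) ∧ v ∈ V₁ := by
  subst hV₂
  have hb : IsNormalBasis x b := hx
  set i₀ : Fin k := ⟨l, by omega⟩
  set i₁ : Fin k := ⟨l + 1, hl⟩
  have hi : i₀ ≠ i₁ := by simp [i₀, i₁, Fin.ext_iff]
  have hle : α (l + 1) + β (l + 1) ≤ α l + β l := by
    have : α (l + 1) ≤ α l := hα (by omega)
    omega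
  have h₁ : 0 < α (l + 1) + β (l + 1) := by omega
  have hV₁orbit : V₁ = spanRowsOrbit x b (fun i => i ≠ i₀ ∧ i ≠ i₁)
      (b (rowTop i₀ (h₁.trans_le hle)) + b (rowTop i₁ h₁)) := by
    rw [hV₁, spanRowsOrbit]
    simp only [rowTop, i₀, i₁, Fin.ne_iff_vne, heq]
  obtain ⟨b', hb'⟩ := b.exists_basis_apply_eq_add _ (constr_alignedRow_alignedRow (b := b) hi)
  have hV₁basis : V₁ = span F (b' '' (Sigma.fst ⁻¹' {i₁})ᶜ) :=
    hV₁orbit.trans (hb.spanRowsOrbit_eq hi hle h₁ hb')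
  have hV₂basis := range_row_eq_image hi hb'
  refine ⟨?_, ?_, ?_, hV₁orbit ▸ hb.mapsTo_spanRowsOrbit _ _,
    fun _ hw => hb.mapsTo_span_row i₁ hw, ?_⟩
  · rw [hV₁basis, hV₂basis]
    exact b'.linearIndependent.isCompl_span_image b'.span_eq isCompl_compl.symm
  · rw [hV₁basis]
    exact fun h => b'.ne_zero ⟨i₀, ⟨0, h₁.trans_le hle⟩⟩ (span_eq_bot.1 h _ ⟨_, hi, rfl⟩)
  · exact fun h => b.ne_zero ⟨i₁, ⟨0, h₁⟩⟩ (span_eq_bot.1 h _ ⟨_, rfl⟩)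
  · rw [hv, hV₁orbit]
    exact hb.sum_mem_spanRowsOrbit hi hle (a := fun i => α i) (fun _ => Nat.le_add_right _ _) hne
      (by simp only [i₀, i₁]; omega)
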